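/- Let W be a finite Coxeter group and x, y, w ∈ W. If x ∘ y⁻¹ ≤ w in the strong Bruhat order, where ∘ is the Demazure product, then Θ(x, y, w) = q^{ℓ(x) + ℓ(y)}. -/

import Mathlib

open Polynomial

namespace PaperBase

variable {B : Type*} {W : Type*} [Group W] {M : CoxeterMatrix B} (cs : CoxeterSystem M W)

/-- The strong Bruhat order: `u ≤ w` iff some reduced word for `w` has a sublist that is a
reduced word for `u`. -/
def BruhatLE (u w : W) : Prop :=
  ∃ ω : List B, cs.IsReduced ω ∧ cs.wordProd ω = w ∧
    ∃ ω' : List B, ω'.Sublist ω ∧ cs.IsReduced ω' ∧ cs.wordProd ω' = u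

/-- The strict strong Bruhat order. -/
def BruhatLT (u w : W) : Prop := BruhatLE cs u w ∧ u ≠ w

/-- The right weak Bruhat order: `u ≤_R w` iff `ℓ(w) = ℓ(u) + ℓ(u⁻¹ w)`. -/
def RWeakLE (u w : W) : Prop := cs.length w = cs.length u + cs.length (u⁻¹ * w)

/-- `U_ω ↑ v` along a word `ω`. -/
noncomputable def upLWord (ω : List B) (v : W) : W :=
  ω.foldr (fun i x => if cs.length x < cs.length (cs.simple i * x) then cs.simple i * x else x) v

/-- `U_ω ↓ v` along a word `ω`. -/
noncomputable def downLWord (ω : List B) (v : W) : W :=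
  ω.foldr (fun i x => if cs.length (cs.simple i * x) < cs.length x then cs.simple i * x else x) v

/-- `v ↑ U_ω` along a word `ω`. -/
noncomputable def upRWord (v : W) (ω : List B) : W :=
  ω.foldl (fun x i => if cs.length x < cs.length (x * cs.simple i) then x * cs.simple i else x) v

/-- `v ↓ U_ω` along a word `ω`. -/
noncomputable def downRWord (v : W) (ω : List B) : W :=
  ω.foldl (fun x i => if cs.length (x * cs.simple i) < cs.length x then x * cs.simple i else x) v

/-- A chosen reduced word for `w`. -/
noncomputable def rword (w : W) : List B := (cs.exists_reduced_word' w).choose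

theorem rword_isReduced (w : W) : cs.IsReduced (rword cs w) :=
  (cs.exists_reduced_word' w).choose_spec.1

theorem rword_wordProd (w : W) : cs.wordProd (rword cs w) = w :=
  ((cs.exists_reduced_word' w).choose_spec.2).symm

/-- `U_w ↑ v` for `w : W`, computed along a chosen reduced word for `w`. -/
noncomputable def upL (w v : W) : W := upLWord cs (rword cs w) v

/-- `U_w ↓ v` for `w : W`. -/
noncomputable def downL (w v : W) : W := downLWord cs (rword cs w) v

/-- `v ↑ U_w` for `w : W`. -/
noncomputable def upR (v w : W) : W := upRWord cs v (rword cs w)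

/-- `v ↓ U_w` for `w : W`. -/
noncomputable def downR (v w : W) : W := downRWord cs v (rword cs w)

/-- The Demazure (0-Hecke) product `u ∘ w`. -/
noncomputable def dem (u w : W) : W := upRWord cs u (rword cs w)

/-- Left multiplication by the Hecke algebra generator `T_{s i}` on the free
`ℤ[q]`-module with basis `{T_w}`, realized as `W →₀ ℤ[q]`:
`T_s T_w = T_{sw}` if `sw > w`, and `T_s T_w = (q-1) T_w + q T_{sw}` if `sw < w`. -/
noncomputable def heckeMulSimple (i : B) (f : W →₀ Polynomial ℤ) : W →₀ Polynomial ℤ :=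
  f.sum fun w c =>
    if cs.length w < cs.length (cs.simple i * w)
    then Finsupp.single (cs.simple i * w) c
    else Finsupp.single w ((X - 1) * c) + Finsupp.single (cs.simple i * w) (X * c)

/-- Left multiplication by `T_{π ω}` along a word `ω`. -/
noncomputable def heckeMulWord (ω : List B) (f : W →₀ Polynomial ℤ) : W →₀ Polynomial ℤ :=
  ω.foldr (heckeMulSimple cs) f

/-- The product `T_x T_y` in the Hecke algebra, expanded in the basis `{T_w}`. -/
noncomputable def TT (x y : W) : W →₀ Polynomial ℤ :=
  heckeMulWord cs (rword cs x) (Finsupp.single y 1)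

open Classical in
/-- The linear functional `Λ_w` with `Λ_w (T_y) = q^{ℓ(y)}` if `y ≤ w`, else `0`. -/
noncomputable def Lam (w : W) (f : W →₀ Polynomial ℤ) : Polynomial ℤ :=
  f.sum fun y c => if BruhatLE cs y w then X ^ cs.length y * c else 0

/-- `Θ(x, y, w) = Λ_w (T_x T_{y⁻¹})`. -/
noncomputable def Theta (x y w : W) : Polynomial ℤ := Lam cs w (TT cs x y⁻¹)


section Dev
open CoxeterSystem List

local prefix:100 "σ" => cs.simple
local prefix:100 "π" => cs.wordProd
local prefix:100 "ℓ" => cs.length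

open Classical in
/-- Indicator function valued in `ZMod 2`. -/
noncomputable def ind (u t : W) : ZMod 2 := if u = t then 1 else 0

lemma ind_self (t : W) : ind t t = 1 := by simp [ind]

lemma zmod2_add_self (a : ZMod 2) : a + a = 0 := by revert a; decide

/-- The basic involution on `W × ZMod 2` attached to a simple reflection. -/
noncomputable def parityFun (i : B) : W × ZMod 2 → W × ZMod 2 :=
  fun p => (σ i * p.1 * σ i, p.2 + ind p.1 (σ i))

lemma parityFun_involutive (i : B) : Function.Involutive (parityFun cs i) := by
  intro p
  unfold parityFun
  have h1 : σ i * (σ i * p.1 * σ i) * σ i = p.1 := by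
    rw [← mul_assoc, ← mul_assoc, cs.simple_mul_simple_self, one_mul, mul_assoc,
      cs.simple_mul_simple_self, mul_one]
  have h2 : ind (σ i * p.1 * σ i) (σ i) = ind p.1 (σ i) := by
    unfold ind
    congr 1
    simp only [eq_iff_iff]
    constructor
    · intro h
      have := congrArg (fun z => σ i * z * σ i) h
      rw [← mul_assoc, ← mul_assoc, cs.simple_mul_simple_self, one_mul, mul_assoc,
        cs.simple_mul_simple_self, mul_one] at this
      simpa using this
    · intro h
      rw [h, cs.simple_mul_simple_self, one_mul]
  rw [h1, h2]
  ext
  · rfl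
  · show p.2 + ind p.1 (σ i) + ind p.1 (σ i) = p.2
    rw [add_assoc, zmod2_add_self, add_zero]

/-- The permutation of `W × ZMod 2` attached to a simple reflection. -/
noncomputable def parityPerm (i : B) : Equiv.Perm (W × ZMod 2) :=
  (parityFun_involutive cs i).toPerm

lemma parityPerm_apply (i : B) (p : W × ZMod 2) :
    parityPerm cs i p = (σ i * p.1 * σ i, p.2 + ind p.1 (σ i)) := rfl

open Classical in
/-- Parity count of `t` in the right inversion sequence of `ω`. -/
noncomputable def riscount (ω : List B) (t : W) : ZMod 2 :=
  ((cs.rightInvSeq ω).map (fun u => ind u t)).sum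

lemma riscount_nil (t : W) : riscount cs [] t = 0 := by simp [riscount]

lemma riscount_cons (i : B) (ω : List B) (t : W) :
    riscount cs (i :: ω) t = ind ((π ω)⁻¹ * σ i * π ω) t + riscount cs ω t := by
  simp [riscount, CoxeterSystem.rightInvSeq]

lemma prod_map_parityPerm (ω : List B) (t : W) (ε : ZMod 2) :
    ((ω.map (parityPerm cs)).prod) (t, ε) = (π ω * t * (π ω)⁻¹, ε + riscount cs ω t) := by
  induction ω generalizing ε with
  | nil => simp [riscount_nil, cs.wordProd_nil]
  | cons i ω ih =>
    rw [List.map_cons, List.prod_cons, Equiv.Perm.mul_apply, ih, parityPerm_apply,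
      riscount_cons, cs.wordProd_cons]
    have hind : ind (π ω * t * (π ω)⁻¹) (σ i) = ind ((π ω)⁻¹ * σ i * π ω) t := by
      unfold ind
      congr 1
      simp only [eq_iff_iff]
      constructor
      · intro h
        rw [← h]
        simp [mul_assoc, cs.simple_mul_simple_cancel_left]
      · intro h
        rw [← h]
        simp [mul_assoc, cs.simple_mul_simple_cancel_left, cs.inv_simple,
          cs.simple_mul_simple_cancel_right]
    rw [hind]
    ext
    · show σ i * (π ω * t * (π ω)⁻¹) * σ i = σ i * π ω * t * (σ i * π ω)⁻¹
      simp [mul_inv_rev, cs.inv_simple, mul_assoc]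
    · show ε + riscount cs ω t + ind ((π ω)⁻¹ * σ i * π ω) t
        = ε + (ind ((π ω)⁻¹ * σ i * π ω) t + riscount cs ω t)
      ring

/-- The `q`-th entry (from the end) of the inversion sequence of an alternating word. -/
noncomputable def galt (i j : B) (q : ℕ) : W :=
  (π (alternatingWord i j q))⁻¹ * π (alternatingWord i j (q + 1))

lemma rightInvSeq_alternatingWord (i j : B) (m : ℕ) :
    cs.rightInvSeq (alternatingWord i j m) = ((List.range m).reverse).map (galt cs i j) := by
  induction m with
  | zero => simp [alternatingWord]
  | succ m ih =>
    rw [alternatingWord_succ' i j m]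
    show ((π (alternatingWord i j m))⁻¹ * σ (if Even m then j else i) * π (alternatingWord i j m))
        :: cs.rightInvSeq (alternatingWord i j m) = _
    rw [ih, List.range_succ, List.reverse_append]
    simp only [List.reverse_cons, List.reverse_nil, List.nil_append, List.singleton_append,
      List.map_cons]
    congr 1
    unfold galt
    rw [alternatingWord_succ' i j m, cs.wordProd_cons, ← mul_assoc]

lemma simple_conj_pow (i j : B) (k : ℕ) :
    σ j * (σ i * σ j) ^ k * σ j = ((σ i * σ j)⁻¹) ^ k := by
  induction k with
  | zero => simp [cs.simple_mul_simple_self]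
  | succ k ih =>
    have step : σ j * (σ i * σ j) ^ (k + 1) * σ j
        = (σ j * (σ i * σ j) ^ k * σ j) * (σ j * (σ i * σ j) * σ j) := by
      rw [pow_succ]
      simp only [mul_assoc, cs.simple_mul_simple_cancel_left]
    rw [step, ih]
    have h2 : σ j * (σ i * σ j) * σ j = (σ i * σ j)⁻¹ := by
      rw [mul_inv_rev, cs.inv_simple, cs.inv_simple]
      simp [mul_assoc, cs.simple_mul_simple_self]
    rw [h2, pow_succ]

lemma simple_mul_pow (i j : B) (k : ℕ) :
    σ j * (σ i * σ j) ^ k = ((σ i * σ j) ^ k)⁻¹ * σ j := by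
  have h := simple_conj_pow cs i j k
  rw [inv_pow] at h
  rw [← h]
  simp [mul_assoc, cs.simple_mul_simple_self]

lemma galt_eq (i j : B) (q : ℕ) : galt cs i j q = ((σ i * σ j) ^ q)⁻¹ * σ j := by
  rcases Nat.even_or_odd' q with ⟨p, hq | hq⟩
  · subst hq
    unfold galt
    rw [cs.prod_alternatingWord_eq_mul_pow, cs.prod_alternatingWord_eq_mul_pow]
    have h1 : ¬ Even (2 * p + 1) := by simp [Nat.even_add_one, Nat.even_mul]
    have h2 : Even (2 * p) := by exact ⟨p, by ring⟩
    rw [if_pos h2, if_neg h1, one_mul]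
    have h3 : 2 * p / 2 = p := by omega
    have h4 : (2 * p + 1) / 2 = p := by omega
    rw [h3, h4]
    rw [show (σ j * (σ i * σ j) ^ p) = ((σ i * σ j) ^ p)⁻¹ * σ j from simple_mul_pow cs i j p]
    rw [← mul_assoc, ← mul_inv_rev, ← pow_add, two_mul]
  · subst hq
    unfold galt
    rw [cs.prod_alternatingWord_eq_mul_pow, cs.prod_alternatingWord_eq_mul_pow]
    have h1 : ¬ Even (2 * p + 1) := by simp [Nat.even_add_one, Nat.even_mul]
    have h2 : Even (2 * p + 1 + 1) := by exact ⟨p + 1, by ring⟩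
    rw [if_neg h1, if_pos h2, one_mul]
    have h3 : (2 * p + 1) / 2 = p := by omega
    have h4 : (2 * p + 1 + 1) / 2 = p + 1 := by omega
    rw [h3, h4, mul_inv_rev, cs.inv_simple, mul_assoc,
      simple_mul_pow cs i j (p + 1), ← mul_assoc, ← mul_inv_rev, ← pow_add,
      show p + 1 + p = 2 * p + 1 from by omega]

lemma galt_add_M (i j : B) (q : ℕ) : galt cs i j (q + M i j) = galt cs i j q := by
  rw [galt_eq, galt_eq, pow_add, cs.simple_mul_simple_pow, mul_one]

lemma riscount_alternatingWord (i j : B) (t : W) :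
    riscount cs (alternatingWord i j (2 * M i j)) t = 0 := by
  unfold riscount
  rw [rightInvSeq_alternatingWord]
  rw [List.map_map, List.map_reverse, List.sum_reverse]
  rw [show 2 * M i j = M i j + M i j from by ring, List.range_add, List.map_append,
    List.sum_append, List.map_map]
  have heq : (List.range (M i j)).map (((fun u => ind u t) ∘ galt cs i j) ∘ (fun x => M i j + x))
      = (List.range (M i j)).map ((fun u => ind u t) ∘ galt cs i j) := by
    apply List.map_congr_left
    intro k _
    simp only [Function.comp_apply]
    rw [show M i j + k = k + M i j from by ring, galt_add_M]
  rw [heq, zmod2_add_self]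

lemma prod_map_parityPerm_alt (i j : B) (m : ℕ) :
    ((alternatingWord i j (2 * m)).map (parityPerm cs)).prod
      = (parityPerm cs i * parityPerm cs j) ^ m := by
  induction m with
  | zero => simp [alternatingWord]
  | succ m ih =>
    have h1 : 2 * (m + 1) = (2 * m + 1) + 1 := by ring
    rw [h1, alternatingWord_succ' i j, alternatingWord_succ' i j]
    have h2 : ¬ Even (2 * m + 1) := by simp [Nat.even_add_one, Nat.even_mul]
    have h3 : Even (2 * m) := ⟨m, by ring⟩
    rw [if_neg h2, if_pos h3, List.map_cons, List.map_cons, List.prod_cons, List.prod_cons, ih,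
      pow_succ']
    rw [← mul_assoc]

lemma parityPerm_isLiftable : M.IsLiftable (parityPerm cs) := by
  intro i j
  rw [← prod_map_parityPerm_alt]
  have hpi : π (alternatingWord i j (2 * M i j)) = 1 := by
    rw [cs.prod_alternatingWord_eq_mul_pow]
    have h3 : Even (2 * M i j) := ⟨M i j, by ring⟩
    rw [if_pos h3, one_mul, show 2 * M i j / 2 = M i j from by omega,
      cs.simple_mul_simple_pow]
  apply Equiv.ext
  rintro ⟨t, ε⟩
  rw [prod_map_parityPerm cs _ t ε, riscount_alternatingWord, hpi]
  simp

/-- The parity homomorphism. -/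
noncomputable def parityHom : W →* Equiv.Perm (W × ZMod 2) :=
  cs.lift ⟨parityPerm cs, parityPerm_isLiftable cs⟩

lemma parityHom_wordProd (ω : List B) :
    parityHom cs (π ω) = ((ω.map (parityPerm cs))).prod := by
  unfold CoxeterSystem.wordProd
  rw [map_list_prod, List.map_map]
  congr 1
  apply List.map_congr_left
  intro k _
  simp only [Function.comp_apply]
  exact cs.lift_apply_simple (parityPerm_isLiftable cs) k

/-- The parity cocycle. -/
noncomputable def eta (v t : W) : ZMod 2 := (parityHom cs v (t, 0)).2

lemma eta_eq_riscount (ω : List B) (t : W) : eta cs (π ω) t = riscount cs ω t := by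
  unfold eta
  rw [parityHom_wordProd, prod_map_parityPerm]
  simp

lemma parityHom_apply (v t : W) (ε : ZMod 2) :
    parityHom cs v (t, ε) = (v * t * v⁻¹, ε + eta cs v t) := by
  obtain ⟨ω, -, rfl⟩ := cs.exists_reduced_word' v
  rw [parityHom_wordProd, prod_map_parityPerm, eta_eq_riscount]

lemma eta_mul (u z t : W) : eta cs (u * z) t = eta cs z t + eta cs u (z * t * z⁻¹) := by
  have h1 : parityHom cs (u * z) (t, 0) = parityHom cs u (parityHom cs z (t, 0)) := by
    rw [map_mul]; rfl
  rw [parityHom_apply cs z t 0, parityHom_apply cs u _ _, zero_add] at h1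
  have := congrArg Prod.snd h1
  rw [parityHom_apply cs (u * z) t 0, zero_add] at this
  exact this

lemma eta_simple (d : B) (t : W) : eta cs (σ d) t = ind (σ d) t := by
  have h : σ d = π [d] := by rw [cs.wordProd_cons, cs.wordProd_nil, mul_one]
  rw [h, eta_eq_riscount]
  simp [riscount, CoxeterSystem.rightInvSeq, cs.wordProd_nil]

lemma eta_reflection_self {t : W} (ht : cs.IsReflection t) : eta cs t t = 1 := by
  obtain ⟨w, c, rfl⟩ := ht
  obtain ⟨ω, -, rfl⟩ := cs.exists_reduced_word' w
  induction ω with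
  | nil =>
    rw [cs.wordProd_nil, one_mul, inv_one, mul_one, eta_simple, ind_self]
  | cons d ω ih =>
    rw [cs.wordProd_cons]
    set x := π ω with hx
    set t' := x * σ c * x⁻¹ with ht'
    have hinv : t'⁻¹ = t' := by
      rw [ht']
      simp [mul_inv_rev, cs.inv_simple, mul_assoc]
    have hT : (σ d * x) * σ c * (σ d * x)⁻¹ = σ d * (t' * σ d) := by
      rw [mul_inv_rev, cs.inv_simple, ht']
      simp [mul_assoc]
    rw [hT]
    set T := σ d * (t' * σ d) with hTdef
    rw [eta_mul, eta_mul]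
    have h3 : t' * σ d * T * (t' * σ d)⁻¹ = t' := by
      rw [hTdef, mul_inv_rev, cs.inv_simple, hinv]
      rw [show t' * σ d * (σ d * (t' * σ d)) * (σ d * t') = t' * (σ d * σ d) * t' * ((σ d * σ d) * t') from by
        simp [mul_assoc]]
      rw [cs.simple_mul_simple_self, mul_one, one_mul]
      have ht2 : t' * t' = 1 := by
        nth_rewrite 2 [← hinv]
        exact mul_inv_cancel t'
      rw [ht2, one_mul]
    have h4 : σ d * T * (σ d)⁻¹ = t' := by
      rw [hTdef, cs.inv_simple]
      rw [show σ d * (σ d * (t' * σ d)) * σ d = (σ d * σ d) * t' * (σ d * σ d) from by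
        simp [mul_assoc]]
      rw [cs.simple_mul_simple_self, mul_one, one_mul]
    rw [h3, h4, eta_simple, eta_simple]
    rw [ih]
    have h5 : ind (σ d) T = ind (σ d) t' := by
      unfold ind
      congr 1
      simp only [eq_iff_iff]
      constructor
      · intro h
        rw [hTdef] at h
        have h' : (σ d) * 1 = σ d * (t' * σ d) := by rw [mul_one]; exact h
        have h2 := (mul_left_cancel h').symm
        have h6 : t' = (σ d)⁻¹ := eq_inv_of_mul_eq_one_left h2
        rw [h6, cs.inv_simple]
      · intro h
        rw [hTdef, ← h, cs.simple_mul_simple_self, mul_one]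
    rw [h5]
    rw [show ind (σ d) t' + 1 + ind (σ d) t' = 1 + (ind (σ d) t' + ind (σ d) t') from by ring,
      zmod2_add_self, add_zero]

lemma riscount_eq_zero_of_not_mem {ω : List B} {t : W} (h : t ∉ cs.rightInvSeq ω) :
    riscount cs ω t = 0 := by
  unfold riscount
  apply List.sum_eq_zero
  intro x hx
  obtain ⟨u, hu, rfl⟩ := List.mem_map.mp hx
  unfold ind
  rw [if_neg]
  intro hc
  exact h (hc ▸ hu)

theorem mem_rightInvSeq_of_lt {ω : List B} (hω : cs.IsReduced ω) {t : W}
    (ht : cs.IsReflection t) (hlt : ℓ (π ω * t) < ℓ (π ω)) : t ∈ cs.rightInvSeq ω := by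
  have h1 : eta cs (π ω) t = 1 := by
    have hv : π ω = (π ω * t) * t := by
      rw [mul_assoc, ht.mul_self, mul_one]
    rw [hv, eta_mul]
    have h2 : t * t * t⁻¹ = t := by rw [ht.mul_self, one_mul, ht.inv]
    rw [h2, eta_reflection_self cs ht]
    have h3 : eta cs (π ω * t) t = 0 := by
      obtain ⟨ρ, hρred, hρ⟩ := cs.exists_reduced_word' (π ω * t)
      rw [hρ, eta_eq_riscount]
      apply riscount_eq_zero_of_not_mem
      intro hmem
      have h4 := cs.isRightInversion_of_mem_rightInvSeq hρred hmem
      rw [← hρ] at h4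
      have h5 : ℓ (π ω * t * t) < ℓ (π ω * t) := h4.2
      rw [mul_assoc, ht.mul_self, mul_one] at h5
      omega
    rw [h3, add_zero]
  by_contra hmem
  have := riscount_eq_zero_of_not_mem cs hmem
  rw [eta_eq_riscount] at h1
  rw [this] at h1
  exact absurd h1 (by decide)

theorem exchange_left {ω : List B} (hω : cs.IsReduced ω) {t : W}
    (ht : cs.IsReflection t) (hlt : ℓ (t * π ω) < ℓ (π ω)) :
    ∃ k, k < ω.length ∧ π (ω.eraseIdx k) = t * π ω := by
  have hmem : t ∈ cs.leftInvSeq ω := by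
    have h1 : t ∈ cs.rightInvSeq ω.reverse := by
      apply mem_rightInvSeq_of_lt cs ((cs.isReduced_reverse_iff ω).mpr hω) ht
      rw [cs.wordProd_reverse]
      have heq : (π ω)⁻¹ * t = (t * π ω)⁻¹ := by rw [mul_inv_rev, ht.inv]
      rw [heq, cs.length_inv, cs.length_inv]
      exact hlt
    rw [cs.rightInvSeq_reverse] at h1
    exact (List.mem_reverse).mp h1
  obtain ⟨k, hk, hget⟩ := List.mem_iff_getElem.mp hmem
  rw [cs.length_leftInvSeq] at hk
  refine ⟨k, hk, ?_⟩
  rw [← cs.getD_leftInvSeq_mul_wordProd ω k]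
  congr 1
  rw [List.getD_eq_getElem _ 1 (by rw [cs.length_leftInvSeq]; exact hk)]
  exact hget

/-! ### The chain (Bruhat) order -/

/-- A Bruhat covering-type edge: multiply by a reflection on the left, increasing length. -/
def bEdge (x y : W) : Prop :=
  ∃ t, cs.IsReflection t ∧ y = t * x ∧ cs.length x < cs.length y

/-- The Bruhat order, defined via chains of reflections. -/
def CLe (x y : W) : Prop := Relation.ReflTransGen (bEdge cs) x y

lemma CLe.refl' (x : W) : CLe cs x x := Relation.ReflTransGen.refl

lemma CLe.trans' {x y z : W} (h1 : CLe cs x y) (h2 : CLe cs y z) : CLe cs x z :=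
  Relation.ReflTransGen.trans h1 h2

lemma cLe_of_lt_smul {i : B} {x : W} (h : ℓ x < ℓ (σ i * x)) : CLe cs x (σ i * x) :=
  Relation.ReflTransGen.single ⟨σ i, cs.isReflection_simple i, rfl, h⟩

lemma cLe_smul_of_lt {i : B} {x : W} (h : ℓ (σ i * x) < ℓ x) : CLe cs (σ i * x) x :=
  Relation.ReflTransGen.single ⟨σ i, cs.isReflection_simple i,
    (cs.simple_mul_simple_cancel_left (w := x) i).symm, h⟩

/-- Left Demazure one-step: `max(x, s_i x)`. -/
noncomputable def lmax (i : B) (x : W) : W :=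
  if cs.length x < cs.length (cs.simple i * x) then cs.simple i * x else x

/-- Right Demazure one-step: `max(x, x s_j)`. -/
noncomputable def rmax (x : W) (j : B) : W :=
  if cs.length x < cs.length (x * cs.simple j) then x * cs.simple j else x

lemma cLe_lmax (i : B) (x : W) : CLe cs x (lmax cs i x) := by
  unfold lmax
  split
  · exact cLe_of_lt_smul cs (by assumption)
  · exact Relation.ReflTransGen.refl

lemma lmax_of_lt {i : B} {x : W} (h : ℓ x < ℓ (σ i * x)) : lmax cs i x = σ i * x := if_pos h

lemma lmax_of_gt {i : B} {x : W} (h : ℓ (σ i * x) < ℓ x) : lmax cs i x = x :=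
  if_neg (by omega)

/-- If `y = t x` is a covering (length goes up by exactly one), `s_i x > x` and `s_i y < y`,
then `s_i x = y`. -/
lemma smul_eq_of_cover {t x y : W} {i : B} (ht : cs.IsReflection t) (hxy : y = t * x)
    (hlen : cs.length y = cs.length x + 1) (hx : ℓ x < ℓ (σ i * x)) (hy : ℓ (σ i * y) < ℓ y) :
    σ i * x = y := by
  obtain ⟨ρ, hρred, hρ⟩ := cs.exists_reduced_word' (σ i * y)
  have hπ : π (i :: ρ) = y := by
    rw [cs.wordProd_cons, ← hρ, cs.simple_mul_simple_cancel_left]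
  have hℓy' : ℓ (σ i * y) + 1 = ℓ y := by
    rcases cs.length_simple_mul y i with h | h
    · omega
    · exact h
  have hρlen : ρ.length = ℓ (σ i * y) := by rw [← hρred, ← hρ]
  have hred : cs.IsReduced (i :: ρ) := by
    unfold CoxeterSystem.IsReduced
    rw [hπ, List.length_cons]
    omega
  have hty : ℓ (t * π (i :: ρ)) < ℓ (π (i :: ρ)) := by
    rw [hπ, hxy, ← mul_assoc, ht.mul_self, one_mul, ← hxy]
    omega
  obtain ⟨k, hk, hke⟩ := exchange_left cs hred ht hty
  rw [hπ, hxy, ← mul_assoc, ht.mul_self, one_mul] at hke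
  cases k with
  | zero =>
    rw [List.eraseIdx_cons_zero] at hke
    rw [← hρ] at hke
    rw [← hke, cs.simple_mul_simple_cancel_left]
  | succ k' =>
    exfalso
    rw [List.eraseIdx_cons_succ, cs.wordProd_cons] at hke
    have h2 : σ i * x = π (ρ.eraseIdx k') := by
      rw [← hke, cs.simple_mul_simple_cancel_left]
    have h3 : ℓ (σ i * x) ≤ (ρ.eraseIdx k').length := h2 ▸ cs.length_wordProd_le _
    have hk'lt : k' < ρ.length := by
      simp only [List.length_cons] at hk
      omega
    have h4 := List.length_eraseIdx_add_one hk'lt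
    omega

lemma cLe_lmax_of_bEdge (i : B) {x y : W} (h : bEdge cs x y) :
    CLe cs (lmax cs i x) (lmax cs i y) := by
  obtain ⟨t, ht, rfl, hlen⟩ := h
  rcases cs.length_simple_mul x i with hx | hx
  · rcases cs.length_simple_mul (t * x) i with hy | hy
    · -- both go up
      rw [lmax_of_lt cs (by omega), lmax_of_lt cs (by omega)]
      apply Relation.ReflTransGen.single
      refine ⟨σ i * t * (σ i)⁻¹, ht.conj (σ i), ?_, by omega⟩
      rw [cs.inv_simple]
      simp only [mul_assoc]
      rw [cs.simple_mul_simple_cancel_left]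
    · -- x goes up, y goes down
      rw [lmax_of_lt cs (by omega), lmax_of_gt cs (by omega)]
      by_cases hc : ℓ (t * x) = ℓ x + 1
      · rw [smul_eq_of_cover cs ht rfl hc (by omega) (by omega)]
        exact Relation.ReflTransGen.refl
      · -- length jump at least 3 (parity)
        have hpar : ℓ (t * x) % 2 = (ℓ t + ℓ x) % 2 := cs.length_mul_mod_two t x
        have hodd : Odd (ℓ t) := ht.odd_length
        obtain ⟨c, hc2⟩ := hodd
        have hjump : ℓ x + 3 ≤ ℓ (t * x) := by omega
        have step1 : CLe cs (σ i * x) (σ i * (t * x)) := by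
          apply Relation.ReflTransGen.single
          refine ⟨σ i * t * (σ i)⁻¹, ht.conj (σ i), ?_, by omega⟩
          rw [cs.inv_simple]
          simp only [mul_assoc]
          rw [cs.simple_mul_simple_cancel_left]
        exact step1.trans (cLe_smul_of_lt cs (by omega))
  · -- x goes down : lmax x = x
    rw [lmax_of_gt cs (by omega)]
    rcases cs.length_simple_mul (t * x) i with hy | hy
    · -- y up
      rw [lmax_of_lt cs (by omega)]
      exact (Relation.ReflTransGen.single ⟨t, ht, rfl, hlen⟩).trans
        (cLe_of_lt_smul cs (by omega))
    · -- y down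
      rw [lmax_of_gt cs (by omega)]
      exact Relation.ReflTransGen.single ⟨t, ht, rfl, hlen⟩

lemma cLe_lmax_mono (i : B) {x y : W} (h : CLe cs x y) :
    CLe cs (lmax cs i x) (lmax cs i y) := by
  induction h with
  | refl => exact Relation.ReflTransGen.refl
  | tail _ hedge ih => exact ih.trans (cLe_lmax_of_bEdge cs i hedge)

/-- Any word contains a reduced sublist with the same product. -/
theorem exists_reduced_sublist (ω : List B) :
    ∃ τ, τ.Sublist ω ∧ cs.IsReduced τ ∧ π τ = π ω := by
  suffices H : ∀ n (ω : List B), ω.length ≤ n → ∃ τ, τ.Sublist ω ∧ cs.IsReduced τ ∧ π τ = π ω by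
    exact H ω.length ω le_rfl
  intro n
  induction n with
  | zero =>
    intro ω hω
    rw [Nat.le_zero, List.length_eq_zero_iff] at hω
    subst hω
    exact ⟨[], List.Sublist.refl _, by simp [CoxeterSystem.IsReduced, cs.wordProd_nil], rfl⟩
  | succ n ih =>
    intro ω hω
    by_cases hred : cs.IsReduced ω
    · exact ⟨ω, List.Sublist.refl _, hred, rfl⟩
    · have hne : ω.length ≠ 0 := by
        intro h0
        rw [List.length_eq_zero_iff] at h0
        subst h0
        exact hred (by simp [CoxeterSystem.IsReduced, cs.wordProd_nil])
      have hP : ∃ p, ¬ cs.IsReduced (ω.take (p + 1)) := by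
        refine ⟨ω.length - 1, ?_⟩
        rwa [show ω.length - 1 + 1 = ω.length from by omega, List.take_length]
      classical
      set p := Nat.find hP with hp
      have hPp : ¬ cs.IsReduced (ω.take (p + 1)) := Nat.find_spec hP
      have hplt : p < ω.length := by
        by_contra hge
        push_neg at hge
        rw [List.take_of_length_le (by omega)] at hPp
        -- then ω.take (p+1) = ω, so p ≥ ω.length - 1 is fine; but minimality...
        have hle : p ≤ ω.length - 1 := Nat.find_le (by
          rwa [show ω.length - 1 + 1 = ω.length from by omega, List.take_length])
        omega
      have htakered : cs.IsReduced (ω.take p) := by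
        rcases Nat.eq_zero_or_pos p with h0 | hpos
        · rw [h0, List.take_zero]
          simp [CoxeterSystem.IsReduced, cs.wordProd_nil]
        · have h5 := Nat.find_min hP (show p - 1 < p from by omega)
          rw [not_not] at h5
          rwa [show p - 1 + 1 = p from by omega] at h5
      set c := ω[p] with hc
      have htake1 : ω.take (p + 1) = ω.take p ++ [c] := by
        rw [List.take_succ]
        congr 1
        rw [List.getElem?_eq_getElem hplt]
        rfl
      have hulen : ℓ (π (ω.take p)) = p := by
        rw [htakered, List.length_take]
        omega
      have hcut : ℓ (π (ω.take p) * σ c) + 1 = ℓ (π (ω.take p)) := by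
        rcases cs.length_mul_simple (π (ω.take p)) c with h | h
        · exfalso
          apply hPp
          unfold CoxeterSystem.IsReduced
          rw [htake1, cs.wordProd_append, List.length_append]
          simp only [cs.wordProd_cons, cs.wordProd_nil, mul_one, List.length_cons,
            List.length_nil]
          rw [h, hulen, List.length_take]
          omega
        · exact h
      have ht : cs.IsReflection (π (ω.take p) * σ c * (π (ω.take p))⁻¹) := ⟨π (ω.take p), c, rfl⟩
      have hlt : ℓ ((π (ω.take p) * σ c * (π (ω.take p))⁻¹) * π (ω.take p)) < ℓ (π (ω.take p)) := by
        rw [show π (ω.take p) * σ c * (π (ω.take p))⁻¹ * π (ω.take p) = π (ω.take p) * σ c from by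
          group]
        omega
      obtain ⟨k, hk, hke⟩ := exchange_left cs htakered ht hlt
      rw [show π (ω.take p) * σ c * (π (ω.take p))⁻¹ * π (ω.take p) = π (ω.take p) * σ c from by
        group] at hke
      set A := (ω.take p).eraseIdx k with hA
      set ω' := A ++ ω.drop (p + 1) with hω'
      have hπω' : π ω' = π ω := by
        rw [hω', cs.wordProd_append, hke]
        conv_rhs => rw [← List.take_append_drop (p + 1) ω]
        rw [cs.wordProd_append, htake1, cs.wordProd_append]
        simp only [cs.wordProd_cons, cs.wordProd_nil, mul_one]
      have hsub : ω'.Sublist ω := by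
        rw [hω']
        conv_rhs => rw [← List.take_append_drop (p + 1) ω]
        apply List.Sublist.append _ (List.Sublist.refl _)
        calc A <+ ω.take p := List.eraseIdx_sublist _ _
          _ <+ ω.take (p + 1) := by rw [htake1]; exact List.sublist_append_left _ _
      have hlen' : ω'.length ≤ n := by
        rw [hω', List.length_append]
        have h1 := List.length_eraseIdx_add_one hk
        rw [← hA] at h1
        have h2 : (ω.drop (p + 1)).length = ω.length - (p + 1) := List.length_drop
        have h3 : (ω.take p).length = p := by rw [List.length_take]; omega
        omega
      obtain ⟨τ, hτsub, hτred, hτπ⟩ := ih ω' hlen'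
      exact ⟨τ, hτsub.trans hsub, hτred, by rw [hτπ, hπω']⟩


theorem sublist_of_cLe {u w : W} (h : CLe cs u w) :
    ∀ ω : List B, cs.IsReduced ω → π ω = w →
      ∃ τ, τ.Sublist ω ∧ cs.IsReduced τ ∧ π τ = u := by
  induction h with
  | refl =>
    intro ω hred hπ
    exact ⟨ω, List.Sublist.refl _, hred, hπ⟩
  | @tail b c _ hedge ih =>
    intro ω hred hπ
    obtain ⟨t, ht, hc, hlen⟩ := hedge
    have hlt : ℓ (t * π ω) < ℓ (π ω) := by
      rw [hπ, hc, ← mul_assoc, ht.mul_self, one_mul, ← hc]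
      exact hlen
    obtain ⟨k, hk, hke⟩ := exchange_left cs hred ht hlt
    have hkeb : π (ω.eraseIdx k) = b := by
      rw [hke, hπ, hc, ← mul_assoc, ht.mul_self, one_mul]
    obtain ⟨ρ, hρsub, hρred, hρπ⟩ := exists_reduced_sublist cs (ω.eraseIdx k)
    obtain ⟨τ, h1, h2, h3⟩ := ih ρ hρred (by rw [hρπ, hkeb])
    exact ⟨τ, h1.trans (hρsub.trans (List.eraseIdx_sublist _ _)), h2, h3⟩

theorem bruhatLE_of_cLe {u w : W} (h : CLe cs u w) : BruhatLE cs u w := by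
  obtain ⟨ω, hred, hπ⟩ := cs.exists_reduced_word' w
  obtain ⟨τ, h1, h2, h3⟩ := sublist_of_cLe cs h ω hred hπ.symm
  exact ⟨ω, hred, hπ.symm, τ, h1, h2, h3⟩

theorem cLe_of_sublist : ∀ ω τ : List B, cs.IsReduced ω → cs.IsReduced τ → τ.Sublist ω →
    CLe cs (π τ) (π ω) := by
  intro ω
  induction ω with
  | nil =>
    intro τ _ _ hsub
    rw [List.sublist_nil.mp hsub]
    exact Relation.ReflTransGen.refl
  | cons i ω ih =>
    intro τ hredω hredτ hsub
    have hωred : cs.IsReduced ω := by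
      have := CoxeterSystem.IsReduced.drop hredω 1
      simpa using this
    have hup : ℓ (π ω) < ℓ (π (i :: ω)) := by
      rw [hredω, hωred, List.length_cons]
      omega
    rcases List.sublist_cons_iff.mp hsub with hcase | ⟨r, rfl, hr⟩
    · refine (ih τ hωred hredτ hcase).trans ?_
      rw [cs.wordProd_cons]
      rw [cs.wordProd_cons] at hup
      exact cLe_of_lt_smul cs hup
    · have hrred : cs.IsReduced r := by
        have := CoxeterSystem.IsReduced.drop hredτ 1
        simpa using this
      have h1 := ih r hωred hrred hr
      have h2 := cLe_lmax_mono cs i h1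
      have hτup : ℓ (π r) < ℓ (σ i * π r) := by
        have h5 := hredτ
        rw [CoxeterSystem.IsReduced, cs.wordProd_cons, List.length_cons] at h5
        have h6 : ℓ (π r) = r.length := hrred
        omega
      have hωup : ℓ (π ω) < ℓ (σ i * π ω) := by
        rw [cs.wordProd_cons] at hup
        exact hup
      rw [lmax_of_lt cs hτup, lmax_of_lt cs hωup] at h2
      rw [cs.wordProd_cons, cs.wordProd_cons]
      exact h2

theorem cLe_of_bruhatLE {u w : W} (h : BruhatLE cs u w) : CLe cs u w := by
  obtain ⟨ω, hred, hπ, τ, hsub, hτred, hτπ⟩ := h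
  rw [← hπ, ← hτπ]
  exact cLe_of_sublist cs ω τ hred hτred hsub

/-! ### The Demazure product -/

lemma rmax_of_lt {j : B} {x : W} (h : ℓ x < ℓ (x * σ j)) : rmax cs x j = x * σ j := if_pos h

lemma rmax_of_gt {j : B} {x : W} (h : ℓ (x * σ j) < ℓ x) : rmax cs x j = x := if_neg (by omega)

/-- The key dihedral-type identity, via the exchange property. -/
lemma smul_eq_mul_simple {i j : B} {u : W} (h1 : ℓ (σ i * u) = ℓ u + 1)
    (h2 : ℓ (u * σ j) = ℓ u + 1) (h3 : ℓ (σ i * (u * σ j)) = ℓ u) :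
    σ i * u = u * σ j := by
  obtain ⟨ρ, hρred, hρπ⟩ := cs.exists_reduced_word' u
  have hρlen : ρ.length = ℓ u := by rw [hρπ, hρred]
  have hπσ : π (ρ ++ [j]) = u * σ j := by
    rw [cs.wordProd_append, ← hρπ]
    simp [cs.wordProd_cons, cs.wordProd_nil]
  have hσred : cs.IsReduced (ρ ++ [j]) := by
    unfold CoxeterSystem.IsReduced
    rw [hπσ, List.length_append, h2]
    simp [hρlen]
  have hlt : ℓ (σ i * π (ρ ++ [j])) < ℓ (π (ρ ++ [j])) := by
    rw [hπσ, h3, h2]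
    omega
  obtain ⟨k, hk, hke⟩ := exchange_left cs hσred (cs.isReflection_simple i) hlt
  rw [hπσ] at hke
  by_cases hkρ : k < ρ.length
  · exfalso
    rw [List.eraseIdx_append_of_lt_length hkρ] at hke
    rw [cs.wordProd_append] at hke
    simp only [cs.wordProd_cons, cs.wordProd_nil, mul_one] at hke
    have h5 : π (ρ.eraseIdx k) = σ i * u := by
      have h6 : π (ρ.eraseIdx k) * σ j = (σ i * u) * σ j := by
        rw [hke, mul_assoc]
      exact mul_right_cancel h6
    have h7 : ℓ (σ i * u) ≤ (ρ.eraseIdx k).length := h5 ▸ cs.length_wordProd_le _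
    have h8 := List.length_eraseIdx_add_one hkρ
    omega
  · have hkeq : k = ρ.length := by
      rw [List.length_append, List.length_cons, List.length_nil] at hk
      omega
    rw [hkeq, List.eraseIdx_append_of_length_le le_rfl] at hke
    simp only [Nat.sub_self, List.eraseIdx_cons_zero, List.append_nil] at hke
    rw [← hρπ] at hke
    have := congrArg (fun z => σ i * z) hke
    rw [← mul_assoc, cs.simple_mul_simple_self, one_mul] at this
    exact this

/-- Left and right Demazure one-step products commute. -/
lemma lmax_rmax_comm (i j : B) (u : W) :
    lmax cs i (rmax cs u j) = rmax cs (lmax cs i u) j := by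
  rcases cs.length_simple_mul u i with hx | hx
  · rcases cs.length_mul_simple u j with hy | hy
    · -- both up
      rcases cs.length_mul_simple (σ i * u) j with hz | hz
      · rw [rmax_of_lt cs (by omega), lmax_of_lt cs (i := i)
          (by rw [← mul_assoc]; omega), lmax_of_lt cs (by omega),
          rmax_of_lt cs (by omega), mul_assoc]
      · -- the dihedral case
        have h3 : ℓ (σ i * (u * σ j)) = ℓ u := by
          rw [← mul_assoc]
          omega
        rw [rmax_of_lt cs (by omega), lmax_of_gt cs (by omega),
          lmax_of_lt cs (by omega), rmax_of_gt cs (by omega)]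
        exact (smul_eq_mul_simple cs hx hy h3).symm
    · -- x up, y down
      have hb : ℓ (σ i * (u * σ j)) ≤ ℓ u := by
        rcases cs.length_simple_mul (u * σ j) i with h | h <;> omega
      rw [rmax_of_gt cs (by omega), lmax_of_lt cs (by omega),
        rmax_of_gt cs (by rw [mul_assoc]; omega)]
  · rcases cs.length_mul_simple u j with hy | hy
    · -- x down, y up
      have hb : ℓ ((σ i * u) * σ j) ≤ ℓ u := by
        rcases cs.length_mul_simple (σ i * u) j with h | h <;> omega
      rw [rmax_of_lt cs (by omega), lmax_of_gt cs (by rw [← mul_assoc]; omega),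
        lmax_of_gt cs (by omega), rmax_of_lt cs (by omega)]
    · -- both down
      rw [rmax_of_gt cs (by omega), lmax_of_gt cs (by omega), rmax_of_gt cs (by omega)]

lemma upLWord_nil (v : W) : upLWord cs [] v = v := rfl

lemma upLWord_cons (i : B) (ω : List B) (v : W) :
    upLWord cs (i :: ω) v = lmax cs i (upLWord cs ω v) := rfl

lemma upRWord_nil (v : W) : upRWord cs v [] = v := rfl

lemma upRWord_cons (v : W) (j : B) (ω : List B) :
    upRWord cs v (j :: ω) = upRWord cs (rmax cs v j) ω := rfl

lemma lmax_upRWord (ρ : List B) (i : B) (u : W) :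
    lmax cs i (upRWord cs u ρ) = upRWord cs (lmax cs i u) ρ := by
  induction ρ generalizing u with
  | nil => rfl
  | cons j ρ ih =>
    rw [upRWord_cons, upRWord_cons, ih, lmax_rmax_comm]

lemma upRWord_of_reduced : ∀ (ρ σl : List B), cs.IsReduced (σl ++ ρ) →
    upRWord cs (π σl) ρ = π (σl ++ ρ) := by
  intro ρ
  induction ρ with
  | nil =>
    intro σl _
    rw [upRWord_nil, List.append_nil]
  | cons j ρ ih =>
    intro σl hred
    have hpre : cs.IsReduced (σl ++ [j]) := by
      have h1 := CoxeterSystem.IsReduced.take hred (σl.length + 1)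
      rwa [List.take_append, List.take_of_length_le (by omega),
        show σl.length + 1 - σl.length = 1 from by omega, List.take_succ_cons, List.take_zero]
        at h1
    have hσred : cs.IsReduced σl := by
      have h1 := CoxeterSystem.IsReduced.take hred σl.length
      rwa [List.take_append, List.take_of_length_le (by omega), Nat.sub_self,
        List.take_zero, List.append_nil] at h1
    have hup : ℓ (π σl) < ℓ (π σl * σ j) := by
      have e1 : π (σl ++ [j]) = π σl * σ j := by
        rw [cs.wordProd_append]
        simp [cs.wordProd_cons, cs.wordProd_nil]
      rw [← e1, hpre, hσred, List.length_append, List.length_cons, List.length_nil]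
      omega
    rw [upRWord_cons, rmax_of_lt cs hup]
    have e1 : π σl * σ j = π (σl ++ [j]) := by
      rw [cs.wordProd_append]
      simp [cs.wordProd_cons, cs.wordProd_nil]
    rw [e1, ih (σl ++ [j]) (by rwa [List.append_assoc, List.singleton_append]),
      List.append_assoc, List.singleton_append]

/-- The Demazure product computed left-along a reduced word agrees with `dem`. -/
lemma upLWord_eq_upRWord : ∀ ω : List B, cs.IsReduced ω → ∀ v : W,
    upLWord cs ω v = upRWord cs (π ω) (rword cs v) := by
  intro ω
  induction ω with
  | nil =>
    intro _ v
    rw [upLWord_nil, cs.wordProd_nil]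
    have h1 := upRWord_of_reduced cs (rword cs v) [] (by simpa using rword_isReduced cs v)
    rw [cs.wordProd_nil] at h1
    rw [h1]
    simpa using (rword_wordProd cs v).symm
  | cons i ω ih =>
    intro hred v
    have hωred : cs.IsReduced ω := by
      have := CoxeterSystem.IsReduced.drop hred 1
      simpa using this
    have hup : ℓ (π ω) < ℓ (σ i * π ω) := by
      have h5 := hred
      rw [CoxeterSystem.IsReduced, cs.wordProd_cons, List.length_cons] at h5
      have h6 : ℓ (π ω) = ω.length := hωred
      omega
    rw [upLWord_cons, ih hωred, lmax_upRWord, lmax_of_lt cs hup, cs.wordProd_cons]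

/-! ### The Hecke algebra computation -/

lemma lam_zero (w : W) : Lam cs w 0 = 0 := Finsupp.sum_zero_index

open Classical in
lemma lam_single (w u : W) (c : Polynomial ℤ) :
    Lam cs w (Finsupp.single u c)
      = if BruhatLE cs u w then X ^ cs.length u * c else 0 := by
  unfold Lam
  refine Finsupp.sum_single_index ?_
  by_cases hy : BruhatLE cs u w
  · rw [if_pos hy, mul_zero]
  · rw [if_neg hy]

lemma lam_add (w : W) (f g : W →₀ Polynomial ℤ) :
    Lam cs w (f + g) = Lam cs w f + Lam cs w g := by
  unfold Lam
  apply Finsupp.sum_add_index'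
  · intro y
    by_cases hy : BruhatLE cs y w
    · rw [if_pos hy, mul_zero]
    · rw [if_neg hy]
  · intro y c d
    by_cases hy : BruhatLE cs y w
    · rw [if_pos hy, if_pos hy, if_pos hy, mul_add]
    · rw [if_neg hy, if_neg hy, if_neg hy, add_zero]

/-- `Lam` as an additive monoid homomorphism. -/
noncomputable def lamHom (w : W) : (W →₀ Polynomial ℤ) →+ Polynomial ℤ where
  toFun := Lam cs w
  map_zero' := lam_zero cs w
  map_add' := lam_add cs w

lemma lam_single_of_cLe {w u : W} (h : CLe cs u w) (c : Polynomial ℤ) :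
    Lam cs w (Finsupp.single u c) = X ^ cs.length u * c := by
  rw [lam_single, if_pos (bruhatLE_of_cLe cs h)]

lemma heckeMulWord_cons (i : B) (ω : List B) (f : W →₀ Polynomial ℤ) :
    heckeMulWord cs (i :: ω) f = heckeMulSimple cs i (heckeMulWord cs ω f) := rfl

lemma support_heckeMulSimple (i : B) (f : W →₀ Polynomial ℤ) {u : W}
    (hu : u ∈ (heckeMulSimple cs i f).support) :
    ∃ u₀ ∈ f.support, u = u₀ ∨ u = cs.simple i * u₀ := by
  classical
  have h1 := Finsupp.support_sum hu
  rw [Finset.mem_biUnion] at h1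
  obtain ⟨u₀, hu₀, hmem⟩ := h1
  refine ⟨u₀, hu₀, ?_⟩
  by_cases hc : cs.length u₀ < cs.length (cs.simple i * u₀)
  · rw [if_pos hc] at hmem
    have := Finsupp.support_single_subset hmem
    rw [Finset.mem_singleton] at this
    exact Or.inr this
  · rw [if_neg hc] at hmem
    have h2 := Finsupp.support_add hmem
    rw [Finset.mem_union] at h2
    rcases h2 with h3 | h3
    · have := Finsupp.support_single_subset h3
      rw [Finset.mem_singleton] at this
      exact Or.inl this
    · have := Finsupp.support_single_subset h3
      rw [Finset.mem_singleton] at this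
      exact Or.inr this

lemma support_heckeMulWord (ω : List B) (v : W) {u : W}
    (hu : u ∈ (heckeMulWord cs ω (Finsupp.single v 1)).support) :
    CLe cs u (upLWord cs ω v) := by
  induction ω generalizing u with
  | nil =>
    have h1 := Finsupp.support_single_subset hu
    rw [Finset.mem_singleton] at h1
    rw [h1, upLWord_nil]
    exact Relation.ReflTransGen.refl
  | cons i ω ih =>
    rw [heckeMulWord_cons] at hu
    obtain ⟨u₀, hu₀, hcase⟩ := support_heckeMulSimple cs i _ hu
    have h0 := ih hu₀
    rw [upLWord_cons]
    rcases hcase with rfl | rfl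
    · exact h0.trans (cLe_lmax cs i _)
    · rcases Nat.lt_or_ge (cs.length u₀) (cs.length (cs.simple i * u₀)) with hc | hc
      · have := cLe_lmax_mono cs i h0
        rwa [lmax_of_lt cs hc] at this
      · have hne := cs.length_simple_mul_ne u₀ i
        have hlt : ℓ (σ i * u₀) < ℓ u₀ := by omega
        exact ((cLe_smul_of_lt cs hlt).trans h0).trans (cLe_lmax cs i _)

open Classical in
lemma lam_heckeMulWord (w : W) (ω : List B) (v : W)
    (h : CLe cs (upLWord cs ω v) w) :
    Lam cs w (heckeMulWord cs ω (Finsupp.single v 1))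
      = (X : Polynomial ℤ) ^ (ω.length + cs.length v) := by
  induction ω with
  | nil =>
    rw [show heckeMulWord cs [] (Finsupp.single v 1) = Finsupp.single v 1 from rfl]
    rw [lam_single_of_cLe cs (by rw [← upLWord_nil cs v]; exact h), mul_one, List.length_nil,
      zero_add]
  | cons i ω ih =>
    have hU : CLe cs (upLWord cs ω v) w := ((cLe_lmax cs i _).trans (by rwa [← upLWord_cons]))
    set f := heckeMulWord cs ω (Finsupp.single v 1) with hf
    have hstep : Lam cs w (heckeMulSimple cs i f) = X * Lam cs w f := by
      unfold heckeMulSimple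
      rw [show Lam cs w (f.sum fun u c =>
          if cs.length u < cs.length (cs.simple i * u)
          then Finsupp.single (cs.simple i * u) c
          else Finsupp.single u ((X - 1) * c) + Finsupp.single (cs.simple i * u) (X * c))
        = (lamHom cs w) (f.sum fun u c =>
          if cs.length u < cs.length (cs.simple i * u)
          then Finsupp.single (cs.simple i * u) c
          else Finsupp.single u ((X - 1) * c) + Finsupp.single (cs.simple i * u) (X * c))
        from rfl]
      rw [Finsupp.sum, map_sum]
      have hLamf : Lam cs w f = ∑ u ∈ f.support, X ^ cs.length u * f u := by
        unfold Lam Finsupp.sum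
        apply Finset.sum_congr rfl
        intro u hu
        show (if BruhatLE cs u w then X ^ cs.length u * f u else 0) = X ^ cs.length u * f u
        rw [if_pos (bruhatLE_of_cLe cs ((support_heckeMulWord cs ω v hu).trans hU))]
      rw [hLamf, Finset.mul_sum]
      apply Finset.sum_congr rfl
      intro u hu
      have huw : CLe cs u w := (support_heckeMulWord cs ω v hu).trans hU
      have huU : CLe cs u (upLWord cs ω v) := support_heckeMulWord cs ω v hu
      show Lam cs w _ = _
      rcases Nat.lt_or_ge (cs.length u) (cs.length (cs.simple i * u)) with hc | hc
      · rw [if_pos hc]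
        have hsu : CLe cs (cs.simple i * u) w := by
          have h2 := cLe_lmax_mono cs i huU
          rw [lmax_of_lt cs hc] at h2
          refine h2.trans ?_
          rw [← upLWord_cons]
          exact h
        rw [lam_single_of_cLe cs hsu]
        have hlen : cs.length (cs.simple i * u) = cs.length u + 1 := by
          rcases cs.length_simple_mul u i with h' | h' <;> omega
        rw [hlen, pow_succ]
        ring
      · rw [if_neg (show ¬ cs.length u < cs.length (cs.simple i * u) from by omega)]
        have hne := cs.length_simple_mul_ne u i
        have hlt : ℓ (σ i * u) < ℓ u := by omega
        have hlen : cs.length (cs.simple i * u) + 1 = cs.length u := by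
          rcases cs.length_simple_mul u i with h' | h' <;> omega
        have hsu : CLe cs (cs.simple i * u) w := (cLe_smul_of_lt cs hlt).trans huw
        rw [lam_add, lam_single_of_cLe cs huw, lam_single_of_cLe cs hsu]
        rw [← hlen, pow_succ]
        ring
    rw [heckeMulWord_cons, hstep, ih hU, List.length_cons, ← pow_succ']
    congr 1
    omega


end Dev

/-- If `x ∘ y⁻¹ ≤ w` then `Θ(x,y,w) = q^{ℓ(x)+ℓ(y)}`. -/
theorem stmt15 [Finite W] (x y w : W) (h : BruhatLE cs (dem cs x y⁻¹) w) :
    Theta cs x y w = (X : Polynomial ℤ) ^ (cs.length x + cs.length y) := by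
  have hwd : upLWord cs (rword cs x) y⁻¹ = dem cs x y⁻¹ := by
    have h1 := upLWord_eq_upRWord cs (rword cs x) (rword_isReduced cs x) y⁻¹
    rw [rword_wordProd] at h1
    exact h1
  have h2 : CLe cs (upLWord cs (rword cs x) y⁻¹) w := by
    rw [hwd]
    exact cLe_of_bruhatLE cs h
  have h3 := lam_heckeMulWord cs w (rword cs x) y⁻¹ h2
  have hlen : (rword cs x).length = cs.length x := by
    have := rword_isReduced cs x
    rw [CoxeterSystem.IsReduced, rword_wordProd] at this
    omega
  rw [Theta, TT, h3, hlen, cs.length_inv]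

end PaperBase
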